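/- Let Δ ≥ 0, π₀ > 0, φ > 0, r = Δ/(Δ+π₀), and s* = (φ/2)·ln((1+r)/(1−r)). For every s ∈ ℝ, the quantity −(Δ + π₀)|s|(tanh(|s|/φ) − r) is bounded above by s*·(Δ + π₀). -/
import Mathlib

lemma tanh_lt_aux {x r : ℝ} (hx : 0 ≤ x) (hr1 : r < 1)
    (h : Real.tanh x < r) : x < (1 / 2) * Real.log ((1 + r) / (1 - r)) := by
  have hc := Real.cosh_pos x
  have h1 : Real.sinh x < r * Real.cosh x := by
    rw [Real.tanh_eq_sinh_div_cosh, div_lt_iff₀ hc] at h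
    exact h
  rw [Real.sinh_eq, Real.cosh_eq] at h1
  have hex : (0:ℝ) < Real.exp x := Real.exp_pos x
  have h2 : Real.exp x * (1 - r) < Real.exp (-x) * (1 + r) := by nlinarith
  rw [Real.exp_neg] at h2
  have h3 : Real.exp x * Real.exp x * (1 - r) < 1 + r := by
    have := mul_lt_mul_of_pos_left h2 hex
    calc Real.exp x * Real.exp x * (1 - r) = Real.exp x * (Real.exp x * (1 - r)) := by ring
      _ < Real.exp x * ((Real.exp x)⁻¹ * (1 + r)) := this
      _ = 1 + r := by field_simp
  have hr1' : (0:ℝ) < 1 - r := by linarith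
  have h4 : Real.exp (2 * x) < (1 + r) / (1 - r) := by
    rw [lt_div_iff₀ hr1', two_mul, Real.exp_add]
    exact h3
  have h5 : 2 * x < Real.log ((1 + r) / (1 - r)) := by
    have hpos : (0:ℝ) < (1 + r) / (1 - r) := lt_trans (Real.exp_pos _) h4
    calc 2 * x = Real.log (Real.exp (2 * x)) := (Real.log_exp _).symm
      _ < Real.log ((1 + r) / (1 - r)) := Real.log_lt_log (Real.exp_pos _) h4
  linarith

lemma tanh_nonneg' {x : ℝ} (hx : 0 ≤ x) : 0 ≤ Real.tanh x := by
  rw [Real.tanh_eq_sinh_div_cosh]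
  exact div_nonneg (Real.sinh_nonneg_iff.mpr hx) (Real.cosh_pos x).le

/-- −(Δ+π₀)|s|(tanh(|s|/φ) − r) ≤ s*·(Δ+π₀) for every s. -/
theorem sliding_residual_bound (Δ π₀ φ : ℝ) (hΔ : 0 ≤ Δ) (hπ : 0 < π₀) (hφ : 0 < φ)
    (r sstar : ℝ) (hr : r = Δ / (Δ + π₀))
    (hs : sstar = (φ / 2) * Real.log ((1 + r) / (1 - r))) :
    ∀ s : ℝ, -((Δ + π₀) * |s| * (Real.tanh (|s| / φ) - r)) ≤ sstar * (Δ + π₀) := by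
  intro s
  have hsum : (0:ℝ) < Δ + π₀ := by linarith
  have hr0 : 0 ≤ r := by rw [hr]; positivity
  have hr1 : r < 1 := by
    rw [hr, div_lt_one hsum]; linarith
  have hargpos : (1:ℝ) ≤ (1 + r) / (1 - r) := by
    rw [le_div_iff₀ (by linarith)]; linarith
  have hlog : 0 ≤ Real.log ((1 + r) / (1 - r)) := Real.log_nonneg hargpos
  have hsstar : 0 ≤ sstar := by rw [hs]; positivity
  have habs : 0 ≤ |s| := abs_nonneg s
  by_cases hcase : r ≤ Real.tanh (|s| / φ)
  · have h0 : 0 ≤ (Δ + π₀) * |s| * (Real.tanh (|s| / φ) - r) :=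
      mul_nonneg (mul_nonneg hsum.le habs) (by linarith)
    nlinarith
  · push_neg at hcase
    have hx : 0 ≤ |s| / φ := by positivity
    have h1 := tanh_lt_aux hx hr1 hcase
    have h2 : |s| < sstar := by
      rw [hs]
      calc |s| = φ * (|s| / φ) := by field_simp
        _ < φ * ((1/2) * Real.log ((1 + r) / (1 - r))) := by
            exact mul_lt_mul_of_pos_left h1 hφ
        _ = φ / 2 * Real.log ((1 + r) / (1 - r)) := by ring
    have ht := tanh_nonneg' hx
    have key : |s| * (r - Real.tanh (|s| / φ)) ≤ sstar := by
      calc |s| * (r - Real.tanh (|s| / φ)) ≤ |s| * 1 :=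
            mul_le_mul_of_nonneg_left (by linarith) habs
        _ = |s| := mul_one _
        _ ≤ sstar := h2.le
    nlinarith
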